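/- arXiv:2102.12336 — 2 statements merged into one kernel-verified Lean document; each statement's English description precedes it below -/
import Mathlib

section
/- In the normalized Hochschild complex of A = k[x,x⁻¹], Connes's boundary B satisfies B(αₙ) = 2n(1⊗αₙ) for αₙ defined by 2αₙ = (x⁻¹⊗x)^{⊗n} − (x⊗x⁻¹)^{⊗n}. -/
/-!
We model the Hochschild chains of the Laurent polynomial algebra `A = k[x,x⁻¹]`
(the group algebra of `ℤ`) through the canonical identification
`A^{⊗(m)} ≅ k[ℤ^m]`: `Ch k m := (Fin m → ℤ) →₀ k`, the basis vector attached to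
`v : Fin m → ℤ` corresponding to the elementary tensor `x^{v 0} ⊗ ⋯ ⊗ x^{v (m-1)}`.
The normalized Hochschild complex is the quotient by the span of elementary tensors
having a `1` (i.e. exponent `0`) in an interior slot; equalities in the normalized
complex are phrased as membership of the difference in that span (`Degenerate`).
-/

/-- Chains with `m` tensor slots: `A^{⊗ m} ≅ k[ℤ^m]`. -/
abbrev Ch (k : Type*) [Field k] (m : ℕ) := (Fin m → ℤ) →₀ k

namespace HochLaurent

variable (k : Type*) [Field k] [CharZero k]

/-- The `i`-th face: multiply the `i`-th and `(i+1)`-st tensor factors. -/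
def mergeFun {m : ℕ} (i : Fin m) (v : Fin (m + 1) → ℤ) : Fin m → ℤ :=
  fun j => if j < i then v j.castSucc
    else if j = i then v j.castSucc + v j.succ else v j.succ

/-- The last face: multiply the last tensor factor into the first one. -/
def wrapFun {m : ℕ} (v : Fin (m + 1) → ℤ) : Fin m → ℤ :=
  fun j => if (j : ℕ) = 0 then v (Fin.last m) + v j.castSucc else v j.castSucc

/-- The Hochschild differential `b` on chains with `m+1` slots (degree `m`). -/
noncomputable def hb (m : ℕ) : Ch k (m + 1) →ₗ[k] Ch k m :=
  (∑ i : Fin m, ((-1 : k) ^ (i : ℕ)) • Finsupp.lmapDomain k k (mergeFun i))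
    + ((-1 : k) ^ m) • Finsupp.lmapDomain k k (wrapFun (m := m))

/-- `1 ⊗ (-)` : tensoring with `1 = x^0` on the left. -/
noncomputable def oneTensor (m : ℕ) : Ch k m →ₗ[k] Ch k (m + 1) :=
  Finsupp.lmapDomain k k (fun v => Fin.cons 0 v)

/-- The span of elementary tensors with a `1` in an interior slot; the normalized
complex is the quotient by this submodule. -/
noncomputable def Degenerate (m : ℕ) : Submodule k (Ch k m) :=
  Submodule.span k
    {c | ∃ (v : Fin m → ℤ) (j : Fin m), (j : ℕ) ≠ 0 ∧ v j = 0 ∧ c = Finsupp.single v 1}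

/-- The element `αₙ` (with `2m` slots, `m = n`), defined by
`2 αₙ = (x⁻¹ ⊗ x)^{⊗ n} - (x ⊗ x⁻¹)^{⊗ n}`. -/
noncomputable def alphaOf (m : ℕ) : Ch k m :=
  (2 : k)⁻¹ •
    (Finsupp.single (fun j : Fin m => if Even (j : ℕ) then -1 else 1) (1 : k)
      - Finsupp.single (fun j : Fin m => if Even (j : ℕ) then 1 else -1) (1 : k))


/-- Connes's boundary `B` on the normalized complex:
`B(x₀ ⊗ ⋯ ⊗ xₘ) = Σᵢ (-1)^{m i} 1 ⊗ xᵢ ⊗ ⋯ ⊗ xₘ ⊗ x₀ ⊗ ⋯ ⊗ x_{i-1}`. -/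
noncomputable def connesB (m : ℕ) : Ch k (m + 1) →ₗ[k] Ch k (m + 2) :=
  ∑ i : Fin (m + 1), ((-1 : k) ^ (m * (i : ℕ))) • Finsupp.lmapDomain k k
    (fun v : Fin (m + 1) → ℤ => Fin.cons 0 (fun t : Fin (m + 1) => v (t + i)))

end HochLaurent

open HochLaurent

/-!
Rotating the tensor factors of `αₙ` by one slot exchanges `(x⁻¹ ⊗ x)^{⊗ n}` and
`(x ⊗ x⁻¹)^{⊗ n}`, so the rotation by `i` slots multiplies `αₙ` by `(-1)^i`. In degree
`2n - 1` this is exactly the sign `(-1)^{(2n-1) i}` carried by the `i`-th term of `B`, so all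
`2n` terms of `B(αₙ)` equal `1 ⊗ αₙ`. The identity therefore holds on the nose, not only
modulo degenerate chains.
-/

theorem Fin.even_val_add_iff {m : ℕ} (hm : Even m) (s t : Fin m) :
    Even ((s + t : Fin m) : ℕ) ↔ (Even (s : ℕ) ↔ Even (t : ℕ)) := by
  rw [Fin.val_add, Nat.even_iff, Nat.mod_mod_of_dvd _ (even_iff_two_dvd.mp hm), ← Nat.even_iff,
    Nat.even_add]

namespace HochLaurent

variable (k : Type*) [Field k]

noncomputable def rotate {m : ℕ} (i : Fin m) : Ch k m →ₗ[k] Ch k m :=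
  Finsupp.lmapDomain k k (fun v t => v (t + i))

theorem connesB_eq_sum_rotate (m : ℕ) :
    connesB k m = ∑ i : Fin (m + 1),
      ((-1 : k) ^ (m * (i : ℕ))) • oneTensor k (m + 1) ∘ₗ rotate k i := by
  refine Finset.sum_congr rfl fun i _ => ?_
  rw [oneTensor, rotate, ← Finsupp.lmapDomain_comp]
  rfl

theorem connesB_apply_of_rotate_eq {m : ℕ} (x : Ch k (m + 1))
    (hx : ∀ i : Fin (m + 1), rotate k i x = (-1 : k) ^ (m * (i : ℕ)) • x) :
    connesB k m x = (m + 1) • oneTensor k (m + 1) x := by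
  have hsq : ∀ e : ℕ, (-1 : k) ^ e * (-1) ^ e = 1 := fun e => by
    rw [← mul_pow, neg_one_mul, neg_neg, one_pow]
  simp [connesB_eq_sum_rotate, LinearMap.sum_apply, hx, smul_smul, hsq]

def parityVec (m : ℕ) (p q : ℤ) : Fin m → ℤ := fun j => if Even (j : ℕ) then p else q

theorem parityVec_comp_add_right {m : ℕ} (hm : Even m) (p q : ℤ) (i : Fin m) :
    (fun t => parityVec m p q (t + i)) =
      if Even (i : ℕ) then parityVec m p q else parityVec m q p := by
  funext t
  by_cases hi : Even (i : ℕ) <;> by_cases ht : Even (t : ℕ) <;>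
    simp [parityVec, Fin.even_val_add_iff hm, hi, ht]

theorem alphaOf_eq (m : ℕ) :
    alphaOf k m = (2 : k)⁻¹ •
      (Finsupp.single (parityVec m (-1) 1) 1 - Finsupp.single (parityVec m 1 (-1)) 1) :=
  rfl

theorem rotate_alphaOf {m : ℕ} (hm : Even m) (i : Fin m) :
    rotate k i (alphaOf k m) = (-1 : k) ^ (i : ℕ) • alphaOf k m := by
  rw [alphaOf_eq, map_smul, smul_comm, map_sub]
  simp only [rotate, Finsupp.lmapDomain_apply, Finsupp.mapDomain_single,
    parityVec_comp_add_right hm]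
  rcases Nat.even_or_odd (i : ℕ) with hi | hi
  · simp [hi.neg_one_pow, hi]
  · simp [hi.neg_one_pow, Nat.not_even_iff_odd.mpr hi]

end HochLaurent

theorem stmt8_general (k : Type*) [Field k] (n : ℕ) :
    connesB k (2 * n + 1) (alphaOf k (2 * n + 2))
      - (2 * n + 2) • oneTensor k (2 * n + 2) (alphaOf k (2 * n + 2))
      ∈ Degenerate k (2 * n + 3) := by
  have hB : connesB k (2 * n + 1) (alphaOf k (2 * n + 2))
      = (2 * n + 2) • oneTensor k (2 * n + 2) (alphaOf k (2 * n + 2)) := by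
    refine connesB_apply_of_rotate_eq k _ fun i => ?_
    rw [rotate_alphaOf k ⟨n + 1, by ring⟩, pow_mul, (odd_two_mul_add_one n).neg_one_pow]
  rw [hB, sub_self]
  exact zero_mem _

theorem stmt8 (k : Type*) [Field k] [CharZero k] (n : ℕ) :
    connesB k (2 * n + 1) (alphaOf k (2 * n + 2))
      - (2 * n + 2) • oneTensor k (2 * n + 2) (alphaOf k (2 * n + 2))
      ∈ Degenerate k (2 * n + 3) :=
  stmt8_general k n
end

section
/- Let B be the localization of the A2 double quiver path algebra at a₁ and a₂, and set μ = a₁⁻¹ + a₂. Then b(β₁) = μ⁻¹⊗μ − μ⊗μ⁻¹ modulo the identifications in the normalized Hochschild complex, where β₁ = e*⊗e⊗μ + μ⊗e*⊗e − e*⊗μ⁻¹⊗e − μ⁻¹⊗e⊗e* + 1⊗e*⊗eμ − 1⊗μ⁻¹e⊗e*; more precisely, b(β₁) equals (a₁⊗a₁⁻¹ − a₁⁻¹⊗a₁) + (a₂⁻¹⊗a₂ − a₂⊗a₂⁻¹) in the normalized Hochschild complex of B over R = ke₁⊕ke₂. -/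
/-!
Let `B` be the A2 localized path algebra: it contains orthogonal idempotents `e1, e2`
with `e1 + e2 = 1`, arrows `f` (for `e`) and `g` (for `e*`) with `f = e2 f e1`,
`g = e1 g e2`, and the elements `a1 = e1 + g f`, `a2 = e2 + f g` are invertible in the
respective corner algebras, with inverses `b1`, `b2`.

We present the relative (over `R = k e1 ⊕ k e2`) normalized Hochschild chains by free
`k`-modules on tuples: `FCh m := (Fin m → B) →₀ k` (the basis vector of `v` standing for
the elementary tensor `v 0 ⊗ ⋯ ⊗ v (m-1)`), with the relations of `k`-multilinearity,
`R`-balancedness (including the cyclic one), and normalization (interior slots in `R`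
vanish) imposed through the submodule `Rel`.  Equality in the relative normalized
Hochschild complex is membership of the difference in `Rel`.
-/

namespace MultPreproj

variable (k : Type*) [Field k] [CharZero k] (B : Type*) [Ring B] [Algebra k B]

/-- Free presentation of `m`-slot Hochschild chains. -/
abbrev FCh (m : ℕ) := (Fin m → B) →₀ k

/-- The Hochschild differential `b : C₂ → C₁`,
`b(x₀ ⊗ x₁ ⊗ x₂) = x₀x₁ ⊗ x₂ - x₀ ⊗ x₁x₂ + x₂x₀ ⊗ x₁`. -/
noncomputable def b3 : FCh k B 3 →ₗ[k] FCh k B 2 :=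
  Finsupp.lmapDomain k k (fun v : Fin 3 → B => ![v 0 * v 1, v 2])
    - Finsupp.lmapDomain k k (fun v : Fin 3 → B => ![v 0, v 1 * v 2])
    + Finsupp.lmapDomain k k (fun v : Fin 3 → B => ![v 2 * v 0, v 1])

variable (e1 e2 : B)

/-- Relations defining the relative normalized complex in slot count `2`:
normalization (interior slot in `R = k e1 ⊕ k e2`), `k`-multilinearity in each slot,
and `R`-balancedness across each tensor sign (including the cyclic one). -/
noncomputable def Rel : Submodule k (FCh k B 2) :=
  Submodule.span k
    ({c | ∃ a r : B, r ∈ Submodule.span k ({e1, e2} : Set B)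
        ∧ c = Finsupp.single ![a, r] (1 : k)}
      ∪ {c | ∃ (v : Fin 2 → B) (j : Fin 2) (x y : B),
          c = Finsupp.single (Function.update v j (x + y)) (1 : k)
            - Finsupp.single (Function.update v j x) (1 : k)
            - Finsupp.single (Function.update v j y) (1 : k)}
      ∪ {c | ∃ (v : Fin 2 → B) (j : Fin 2) (t : k) (x : B),
          c = Finsupp.single (Function.update v j (t • x)) (1 : k)
            - t • Finsupp.single (Function.update v j x) (1 : k)}
      ∪ {c | ∃ a d r : B, (r = e1 ∨ r = e2)
          ∧ (c = Finsupp.single ![a * r, d] (1 : k)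
                - Finsupp.single ![a, r * d] (1 : k)
             ∨ c = Finsupp.single ![r * a, d] (1 : k)
                - Finsupp.single ![a, d * r] (1 : k))})

end MultPreproj

/-!
Write `μ = b1 + (e2 + f g)` and `μ⁻¹ = (e1 + g f) + b2`. Since `b1 g = g b2` and
`b2 f = f b1`, one has `f μ = μ⁻¹ f = f b1` and `μ g = g μ⁻¹ = b1 g`, and after expanding `b`
the terms of `b(β₁)` cancel in pairs except for the two corner contributions
`g f ⊗ μ - μ ⊗ g f - 1 ⊗ g f b1` and its `e2`-analogue. Tensors between orthogonal corners
vanish by `R`-balancedness, `1 ⊗ e1 = b1 ⊗ e1 = 0` by normalization, `e1 ⊗ b1 = 1 ⊗ b1`, and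
`g f b1 = e1 - b1`; so the first contribution is `a1 ⊗ b1 - b1 ⊗ a1`, the second
`a2 ⊗ b2 - b2 ⊗ a2`.
-/

lemma Function.update_pair_zero {α : Type*} (x y z : α) :
    Function.update ![x, y] 0 z = ![z, y] := by
  funext i; fin_cases i <;> rfl

lemma Function.update_pair_one {α : Type*} (x y z : α) :
    Function.update ![x, y] 1 z = ![x, z] := by
  funext i; fin_cases i <;> rfl

section Corner

variable {A : Type*}

lemma IsIdempotentElem.mul_eq_of_eq_mul_mul_left [Semigroup A] {p q x : A}
    (hp : IsIdempotentElem p) (hx : x = p * x * q) : p * x = x := by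
  rw [hx, ← mul_assoc, ← mul_assoc, hp.eq]

lemma IsIdempotentElem.mul_eq_of_eq_mul_mul_right [Semigroup A] {p q x : A}
    (hq : IsIdempotentElem q) (hx : x = p * x * q) : x * q = x := by
  rw [hx, mul_assoc, hq.eq]

lemma mul_eq_zero_of_eq_mul_mul_left [SemigroupWithZero A] {p q r x : A}
    (h : r * p = 0) (hx : x = p * x * q) : r * x = 0 := by
  rw [hx, ← mul_assoc, ← mul_assoc, h, zero_mul, zero_mul]

lemma mul_eq_zero_of_eq_mul_mul_right [SemigroupWithZero A] {p q r x : A}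
    (h : q * r = 0) (hx : x = p * x * q) : x * r = 0 := by
  rw [hx, mul_assoc, mul_assoc, h, mul_zero, mul_zero]

lemma mul_eq_mul_of_mul_eq_mul [Semigroup A] {x u v b b' p q : A} (hx : x * u = v * x)
    (hb : b * v = p) (hb' : u * b' = q) (hpx : p * x = x) (hxq : x * q = x) :
    b * x = x * b' :=
  calc b * x = b * (x * u * b') := by rw [mul_assoc x, hb', hxq]
    _ = p * x * b' := by rw [hx, ← hb]; simp only [mul_assoc]
    _ = x * b' := by rw [hpx]

end Corner

namespace MultPreproj

section Tensor

variable (k : Type*) [Field k] {B : Type*} [Ring B] [Algebra k B] (e1 e2 : B)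

local notation "mk" => Submodule.Quotient.mk (p := Rel k B e1 e2)

lemma mk_single_update_add (v : Fin 2 → B) (j : Fin 2) (x y : B) :
    mk (Finsupp.single (Function.update v j (x + y)) 1)
      = mk (Finsupp.single (Function.update v j x) 1)
        + mk (Finsupp.single (Function.update v j y) 1) := by
  rw [← Submodule.Quotient.mk_add, Submodule.Quotient.eq, ← sub_sub]
  exact Submodule.subset_span (Or.inl (Or.inl (Or.inr ⟨v, j, x, y, rfl⟩)))

lemma mk_single_update_smul (v : Fin 2 → B) (j : Fin 2) (t : k) (x : B) :
    mk (Finsupp.single (Function.update v j (t • x)) 1)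
      = t • mk (Finsupp.single (Function.update v j x) 1) := by
  rw [← Submodule.Quotient.mk_smul, Submodule.Quotient.eq]
  exact Submodule.subset_span (Or.inl (Or.inr ⟨v, j, t, x, rfl⟩))

noncomputable def tensor : B →ₗ[k] B →ₗ[k] FCh k B 2 ⧸ Rel k B e1 e2 :=
  LinearMap.mk₂ k (fun x y => mk (Finsupp.single ![x, y] 1))
    (fun x x' y => by
      simpa only [Function.update_pair_zero] using mk_single_update_add k e1 e2 ![x, y] 0 x x')
    (fun t x y => by
      simpa only [Function.update_pair_zero] using mk_single_update_smul k e1 e2 ![x, y] 0 t x)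
    (fun x y y' => by
      simpa only [Function.update_pair_one] using mk_single_update_add k e1 e2 ![x, y] 1 y y')
    (fun t x y => by
      simpa only [Function.update_pair_one] using mk_single_update_smul k e1 e2 ![x, y] 1 t y)

lemma mk_single_eq_tensor (x y : B) :
    mk (Finsupp.single ![x, y] 1) = tensor k e1 e2 x y := rfl

lemma mk_b3_single (x y z : B) :
    mk (b3 k B (Finsupp.single ![x, y, z] 1))
      = tensor k e1 e2 (x * y) z - tensor k e1 e2 x (y * z) + tensor k e1 e2 (z * x) y := by
  simp [b3, Finsupp.mapDomain_single, ← mk_single_eq_tensor]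

variable {k e1 e2}

lemma tensor_eq_zero_of_mem_span (a : B) {r : B}
    (hr : r ∈ Submodule.span k ({e1, e2} : Set B)) : tensor k e1 e2 a r = 0 :=
  (Submodule.Quotient.mk_eq_zero _).mpr
    (Submodule.subset_span (Or.inl (Or.inl (Or.inl ⟨a, r, hr, rfl⟩))))

lemma tensor_mul_left_eq {r : B} (hr : r = e1 ∨ r = e2) (a d : B) :
    tensor k e1 e2 (a * r) d = tensor k e1 e2 a (r * d) :=
  (Submodule.Quotient.eq _).mpr (Submodule.subset_span (Or.inr ⟨a, d, r, hr, Or.inl rfl⟩))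

lemma tensor_eq_zero_of_mul_eq {r a d : B} (hr : r = e1 ∨ r = e2) (ha : a * r = a)
    (hd : r * d = 0) : tensor k e1 e2 a d = 0 := by
  rw [← ha, tensor_mul_left_eq hr, hd, map_zero]

/-- With `p = e1`, `x = g f`, `y = a₂`, `b = a₁⁻¹` this is the `e1`-corner half of `b(β₁)`. -/
lemma tensor_corner {p q x y b : B} (hp : p = e1 ∨ p = e2) (hq : q = e1 ∨ q = e2)
    (hxp : x * p = x) (hpy : p * y = 0) (hyq : y * q = y) (hqx : q * x = 0)
    (hpb : p * b = b) :
    tensor k e1 e2 x (b + y) - tensor k e1 e2 (b + y) x - tensor k e1 e2 1 (p - b)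
      = tensor k e1 e2 (p + x) b - tensor k e1 e2 b (p + x) := by
  have hp_span : p ∈ Submodule.span k ({e1, e2} : Set B) :=
    Submodule.subset_span (by rcases hp with rfl | rfl <;> simp)
  have hpb' : tensor k e1 e2 p b = tensor k e1 e2 1 b := by
    rw [← one_mul p, tensor_mul_left_eq hp, hpb]
  simp only [map_add, map_sub, LinearMap.add_apply, tensor_eq_zero_of_mul_eq hp hxp hpy,
    tensor_eq_zero_of_mul_eq hq hyq hqx, tensor_eq_zero_of_mem_span _ hp_span, hpb']
  abel

end Tensor

section Quiver

variable {B : Type*} [Ring B]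

structure IsLocalizedA2Quiver (e1 e2 f g b1 b2 : B) : Prop where
  add_eq_one : e1 + e2 = 1
  e1_mul_e2 : e1 * e2 = 0
  e2_mul_e1 : e2 * e1 = 0
  f_eq : f = e2 * f * e1
  g_eq : g = e1 * g * e2
  b1_eq : b1 = e1 * b1 * e1
  a1_mul_b1 : (e1 + g * f) * b1 = e1
  b1_mul_a1 : b1 * (e1 + g * f) = e1
  b2_eq : b2 = e2 * b2 * e2
  a2_mul_b2 : (e2 + f * g) * b2 = e2
  b2_mul_a2 : b2 * (e2 + f * g) = e2

namespace IsLocalizedA2Quiver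

variable {e1 e2 f g b1 b2 : B}

theorem swap (h : IsLocalizedA2Quiver e1 e2 f g b1 b2) :
    IsLocalizedA2Quiver e2 e1 g f b2 b1 :=
  ⟨by rw [add_comm, h.add_eq_one], h.e2_mul_e1, h.e1_mul_e2, h.g_eq, h.f_eq, h.b2_eq,
    h.a2_mul_b2, h.b2_mul_a2, h.b1_eq, h.a1_mul_b1, h.b1_mul_a1⟩

theorem isIdempotentElem_e1 (h : IsLocalizedA2Quiver e1 e2 f g b1 b2) :
    IsIdempotentElem e1 := by
  show e1 * e1 = e1
  simpa only [mul_add, h.e1_mul_e2, add_zero, mul_one] using congrArg (e1 * ·) h.add_eq_one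

theorem e1_mul_g (h : IsLocalizedA2Quiver e1 e2 f g b1 b2) : e1 * g = g :=
  h.isIdempotentElem_e1.mul_eq_of_eq_mul_mul_left h.g_eq

theorem g_mul_e2 (h : IsLocalizedA2Quiver e1 e2 f g b1 b2) : g * e2 = g :=
  h.swap.isIdempotentElem_e1.mul_eq_of_eq_mul_mul_right h.g_eq

theorem e2_mul_g (h : IsLocalizedA2Quiver e1 e2 f g b1 b2) : e2 * g = 0 :=
  mul_eq_zero_of_eq_mul_mul_left h.e2_mul_e1 h.g_eq

theorem g_mul_e1 (h : IsLocalizedA2Quiver e1 e2 f g b1 b2) : g * e1 = 0 :=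
  mul_eq_zero_of_eq_mul_mul_right h.e2_mul_e1 h.g_eq

theorem g_mul_g (h : IsLocalizedA2Quiver e1 e2 f g b1 b2) : g * g = 0 := by
  nth_rw 1 [← h.g_mul_e2]
  rw [mul_assoc, h.e2_mul_g, mul_zero]

theorem e1_mul_b1 (h : IsLocalizedA2Quiver e1 e2 f g b1 b2) : e1 * b1 = b1 :=
  h.isIdempotentElem_e1.mul_eq_of_eq_mul_mul_left h.b1_eq

theorem g_mul_f_mul_e1 (h : IsLocalizedA2Quiver e1 e2 f g b1 b2) : g * f * e1 = g * f := by
  rw [mul_assoc, h.swap.g_mul_e2]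

theorem e1_mul_f_mul_g (h : IsLocalizedA2Quiver e1 e2 f g b1 b2) : e1 * (f * g) = 0 := by
  rw [← mul_assoc, h.swap.e2_mul_g, zero_mul]

theorem e1_mul_e2_add_f_mul_g (h : IsLocalizedA2Quiver e1 e2 f g b1 b2) :
    e1 * (e2 + f * g) = 0 := by
  rw [mul_add, h.e1_mul_e2, h.e1_mul_f_mul_g, add_zero]

theorem e1_add_g_mul_f_mul_e1 (h : IsLocalizedA2Quiver e1 e2 f g b1 b2) :
    (e1 + g * f) * e1 = e1 + g * f := by
  rw [add_mul, h.isIdempotentElem_e1.eq, h.g_mul_f_mul_e1]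

theorem f_mul_mu (h : IsLocalizedA2Quiver e1 e2 f g b1 b2) :
    f * (b1 + (e2 + f * g)) = f * b1 := by
  rw [mul_add, mul_add, h.swap.g_mul_e1, ← mul_assoc, h.swap.g_mul_g, zero_mul, add_zero,
    add_zero]

theorem mu_mul_g (h : IsLocalizedA2Quiver e1 e2 f g b1 b2) :
    (b1 + (e2 + f * g)) * g = b1 * g := by
  rw [add_mul, add_mul, h.e2_mul_g, mul_assoc, h.g_mul_g, mul_zero, add_zero, add_zero]

theorem b1_mul_g (h : IsLocalizedA2Quiver e1 e2 f g b1 b2) : b1 * g = g * b2 := by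
  refine mul_eq_mul_of_mul_eq_mul ?_ h.b1_mul_a1 h.a2_mul_b2 h.e1_mul_g h.g_mul_e2
  rw [mul_add, add_mul, h.g_mul_e2, h.e1_mul_g, mul_assoc]

theorem g_mul_f_mul_b1 (h : IsLocalizedA2Quiver e1 e2 f g b1 b2) :
    g * (f * b1) = e1 - b1 := by
  rw [eq_sub_iff_add_eq', ← h.a1_mul_b1, add_mul, mul_assoc, h.e1_mul_b1]

theorem g_mul_muInv (h : IsLocalizedA2Quiver e1 e2 f g b1 b2) :
    g * ((e1 + g * f) + b2) = b1 * g := by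
  rw [add_comm, h.swap.f_mul_mu, h.b1_mul_g]

theorem muInv_mul_f (h : IsLocalizedA2Quiver e1 e2 f g b1 b2) :
    ((e1 + g * f) + b2) * f = f * b1 := by
  rw [add_comm, h.swap.mu_mul_g, h.swap.b1_mul_g]

theorem f_mul_b1_mul_g (h : IsLocalizedA2Quiver e1 e2 f g b1 b2) :
    f * b1 * g = e2 - b2 := by
  rw [mul_assoc, h.b1_mul_g, h.swap.g_mul_f_mul_b1]

end IsLocalizedA2Quiver

end Quiver

end MultPreproj

open MultPreproj

theorem stmt14_general (k : Type*) [Field k]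
    {B : Type*} [Ring B] [Algebra k B]
    (e1 e2 f g b1 b2 : B)
    (hsum : e1 + e2 = 1) (h12 : e1 * e2 = 0) (h21 : e2 * e1 = 0)
    (hf : f = e2 * f * e1) (hg : g = e1 * g * e2)
    (hb1c : b1 = e1 * b1 * e1)
    (hb1 : (e1 + g * f) * b1 = e1) (hb1' : b1 * (e1 + g * f) = e1)
    (hb2c : b2 = e2 * b2 * e2)
    (hb2 : (e2 + f * g) * b2 = e2) (hb2' : b2 * (e2 + f * g) = e2) :
    b3 k B
        (Finsupp.single ![g, f, b1 + (e2 + f * g)] (1 : k)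
          + Finsupp.single ![b1 + (e2 + f * g), g, f] (1 : k)
          - Finsupp.single ![g, (e1 + g * f) + b2, f] (1 : k)
          - Finsupp.single ![(e1 + g * f) + b2, f, g] (1 : k)
          + Finsupp.single ![1, g, f * (b1 + (e2 + f * g))] (1 : k)
          - Finsupp.single ![1, ((e1 + g * f) + b2) * f, g] (1 : k))
      - (Finsupp.single ![(e1 + g * f), b1] (1 : k)
          - Finsupp.single ![b1, (e1 + g * f)] (1 : k)
          + Finsupp.single ![b2, (e2 + f * g)] (1 : k)
          - Finsupp.single ![(e2 + f * g), b2] (1 : k))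
      ∈ Rel k B e1 e2 := by
  have h : IsLocalizedA2Quiver e1 e2 f g b1 b2 :=
    ⟨hsum, h12, h21, hf, hg, hb1c, hb1, hb1', hb2c, hb2, hb2'⟩
  have corner1 := tensor_corner (k := k) (Or.inl rfl) (Or.inr rfl) h.g_mul_f_mul_e1
    h.e1_mul_e2_add_f_mul_g h.swap.e1_add_g_mul_f_mul_e1 h.swap.e1_mul_f_mul_g h.e1_mul_b1
  have corner2 := tensor_corner (k := k) (Or.inr rfl) (Or.inl rfl) h.swap.g_mul_f_mul_e1
    h.swap.e1_mul_e2_add_f_mul_g h.e1_add_g_mul_f_mul_e1 h.e1_mul_f_mul_g h.swap.e1_mul_b1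
  rw [← Submodule.Quotient.mk_eq_zero]
  simp only [map_add, map_sub, LinearMap.add_apply, Submodule.Quotient.mk_sub,
    Submodule.Quotient.mk_add, mk_b3_single, mk_single_eq_tensor, one_mul, mul_one, h.f_mul_mu,
    h.mu_mul_g, h.g_mul_muInv, h.muInv_mul_f, h.g_mul_f_mul_b1, h.f_mul_b1_mul_g] at corner1 corner2 ⊢
  linear_combination (norm := module) corner1 - corner2

theorem stmt14 (k : Type*) [Field k] [CharZero k]
    {B : Type*} [Ring B] [Algebra k B]
    (e1 e2 f g b1 b2 : B)
    (hsum : e1 + e2 = 1) (h12 : e1 * e2 = 0) (h21 : e2 * e1 = 0)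
    (hf : f = e2 * f * e1) (hg : g = e1 * g * e2)
    (hb1c : b1 = e1 * b1 * e1)
    (hb1 : (e1 + g * f) * b1 = e1) (hb1' : b1 * (e1 + g * f) = e1)
    (hb2c : b2 = e2 * b2 * e2)
    (hb2 : (e2 + f * g) * b2 = e2) (hb2' : b2 * (e2 + f * g) = e2) :
    b3 k B
        (Finsupp.single ![g, f, b1 + (e2 + f * g)] (1 : k)
          + Finsupp.single ![b1 + (e2 + f * g), g, f] (1 : k)
          - Finsupp.single ![g, (e1 + g * f) + b2, f] (1 : k)
          - Finsupp.single ![(e1 + g * f) + b2, f, g] (1 : k)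
          + Finsupp.single ![1, g, f * (b1 + (e2 + f * g))] (1 : k)
          - Finsupp.single ![1, ((e1 + g * f) + b2) * f, g] (1 : k))
      - (Finsupp.single ![(e1 + g * f), b1] (1 : k)
          - Finsupp.single ![b1, (e1 + g * f)] (1 : k)
          + Finsupp.single ![b2, (e2 + f * g)] (1 : k)
          - Finsupp.single ![(e2 + f * g), b2] (1 : k))
      ∈ Rel k B e1 e2 :=
  stmt14_general k e1 e2 f g b1 b2 hsum h12 h21 hf hg hb1c hb1 hb1' hb2c hb2 hb2'
end
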